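/- arXiv:1801.06404 — 2 statements merged into one kernel-verified Lean document; each statement's English description precedes it below -/
import Mathlib

section
/- The limit superior as n → ∞ of γ*_e(K_n)/n² is at most 1/23, where γ*_e(K_n) is the porous exponential domination number of the King grid K_n. -/
/-!
Graph distance in `K_n` is the Chebyshev distance. Take the lattice `i + 5j ≡ 0 (mod 23)`, of
density `1/23`. The lattice points around a vertex `v` form a pattern determined by the residue of
`v.1 + 5 v.2` mod 23, so a finite check over the 23 residues shows that the lattice points within
Chebyshev distance 5 send total weight at least 1 to every `v` whose 11 × 11 box lies in the grid.
Adding the `O(n)` vertices of the boundary strip of width 5 gives a porous exponential dominating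
set of size `n² / 23 + O(n)`.
-/

open SimpleGraph Finset

/-- The weight `2^(1 - dist(u,v))` that vertex `u` sends to vertex `v` in graph `G`. -/
noncomputable def expWeight {V : Type*} (G : SimpleGraph V) (u v : V) : ℝ :=
  (2 : ℝ) ^ ((1 : ℤ) - (G.dist u v : ℤ))

/-- `D` is a porous exponential dominating set of `G` if every vertex receives total
weight at least `1`. -/
def IsPorousExpDomSet {V : Type*} [Fintype V] (G : SimpleGraph V) (D : Finset V) : Prop :=
  ∀ v : V, 1 ≤ ∑ d ∈ D, expWeight G d v

/-- The porous exponential domination number: the minimum cardinality of a porous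
exponential dominating set. -/
noncomputable def porousExpDomNumber {V : Type*} [Fintype V] (G : SimpleGraph V) : ℕ :=
  sInf {k | ∃ D : Finset V, IsPorousExpDomSet G D ∧ D.card = k}

/-- The King grid `K_n = P_n ⊠ P_n`: vertices `(i,j)` with `1 ≤ i,j ≤ n`, two distinct
vertices adjacent iff both coordinates differ by at most 1. -/
def kingGrid (n : ℕ) : SimpleGraph (Fin n × Fin n) :=
  SimpleGraph.fromRel fun v w =>
    ((v.1 : ℤ) - (w.1 : ℤ)).natAbs ≤ 1 ∧ ((v.2 : ℤ) - (w.2 : ℤ)).natAbs ≤ 1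

/-- The Slant grid `S_n`: the grid `P_n □ P_n` together with the diagonal edges
`(i,j) ~ (i+1,j+1)`. -/
def slantGrid (n : ℕ) : SimpleGraph (Fin n × Fin n) :=
  SimpleGraph.fromRel fun v w =>
    ((w.1 : ℕ) = (v.1 : ℕ) + 1 ∧ (w.2 : ℕ) = (v.2 : ℕ)) ∨
    ((w.1 : ℕ) = (v.1 : ℕ) ∧ (w.2 : ℕ) = (v.2 : ℕ) + 1) ∨
    ((w.1 : ℕ) = (v.1 : ℕ) + 1 ∧ (w.2 : ℕ) = (v.2 : ℕ) + 1)

/-- The `n`-dimensional hypercube: vertices are `{0,1}^n`, adjacent iff they differ in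
exactly one coordinate. -/
def hypercube (n : ℕ) : SimpleGraph (Fin n → Bool) :=
  SimpleGraph.fromRel fun u v => hammingDist u v = 1

open Filter Topology

namespace SimpleGraph

variable {V : Type*}

theorem dist_eq_of_adj_le_succ_of_exists_adj_lt (G : SimpleGraph V) (f : V → V → ℕ)
    (hself : ∀ v, f v v = 0) (hadj : ∀ u w v, G.Adj u w → f u v ≤ f w v + 1)
    (hdesc : ∀ u v, u ≠ v → ∃ w, G.Adj u w ∧ f w v < f u v) (u v : V) :
    G.dist u v = f u v := by
  have le_length : ∀ {u : V} (p : G.Walk u v), f u v ≤ p.length := by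
    intro u p
    induction p with
    | nil => simp [hself]
    | cons h p ih => rw [Walk.length_cons]; exact (hadj _ _ _ h).trans (by omega)
  have exists_walk : ∀ k u, f u v = k → ∃ p : G.Walk u v, p.length ≤ k := by
    intro k
    induction k using Nat.strong_induction_on with
    | _ k ih =>
      intro u hu
      by_cases huv : u = v
      · subst huv; exact ⟨.nil, by simp⟩
      obtain ⟨w, hw, hlt⟩ := hdesc u v huv
      obtain ⟨p, hp⟩ := ih _ (hu ▸ hlt) w rfl
      exact ⟨.cons hw p, by rw [Walk.length_cons]; omega⟩
  obtain ⟨p, hp⟩ := exists_walk (f u v) u rfl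
  obtain ⟨q, hq⟩ := p.reachable.exists_walk_length_eq_dist
  exact le_antisymm ((dist_le p).trans hp) (hq ▸ le_length q)

end SimpleGraph

section ExpDomination

variable {V : Type*} {G : SimpleGraph V}

theorem expWeight_pos (G : SimpleGraph V) (u v : V) : 0 < expWeight G u v :=
  zpow_pos two_pos _

theorem one_le_sum_expWeight_of_mem {D : Finset V} {v : V} (hv : v ∈ D) :
    1 ≤ ∑ d ∈ D, expWeight G d v :=
  calc (1 : ℝ) ≤ expWeight G v v := by simp [expWeight]
    _ ≤ ∑ d ∈ D, expWeight G d v := single_le_sum (fun d _ => (expWeight_pos G d v).le) hv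

theorem porousExpDomNumber_le_card [Fintype V] {D : Finset V} (hD : IsPorousExpDomSet G D) :
    porousExpDomNumber G ≤ D.card :=
  Nat.sInf_le ⟨D, hD, rfl⟩

end ExpDomination

section KingGrid

variable {n : ℕ}

def chebyshevDist (u v : Fin n × Fin n) : ℕ :=
  max ((u.1 : ℤ) - v.1).natAbs ((u.2 : ℤ) - v.2).natAbs

theorem chebyshevDist_eq_zero {u v : Fin n × Fin n} : chebyshevDist u v = 0 ↔ u = v := by
  simp only [chebyshevDist, Nat.max_eq_zero_iff, Int.natAbs_eq_zero, sub_eq_zero,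
    Nat.cast_inj, Fin.val_inj, Prod.ext_iff]

theorem kingGrid_adj {u v : Fin n × Fin n} :
    (kingGrid n).Adj u v ↔ u ≠ v ∧ chebyshevDist u v ≤ 1 := by
  simp only [kingGrid, fromRel_adj, chebyshevDist, max_le_iff]
  constructor
  · rintro ⟨h, h' | h'⟩ <;> exact ⟨h, by omega, by omega⟩
  · rintro ⟨h, h'⟩; exact ⟨h, Or.inl h'⟩

theorem Fin.exists_step_toward (a b : Fin n) : ∃ c : Fin n,
    ((a : ℤ) - c).natAbs ≤ 1 ∧ ((c : ℤ) - b).natAbs = ((a : ℤ) - b).natAbs - 1 := by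
  rcases lt_trichotomy a b with h | rfl | h
  · exact ⟨⟨a + 1, by omega⟩, by simp only [Fin.lt_def] at h; push_cast; omega⟩
  · exact ⟨a, by simp⟩
  · refine ⟨⟨a - 1, by omega⟩, ?_⟩
    simp only [Fin.lt_def] at h
    push_cast [Nat.cast_sub (by omega : 1 ≤ (a : ℕ))]
    omega

theorem kingGrid_dist (u v : Fin n × Fin n) : (kingGrid n).dist u v = chebyshevDist u v := by
  refine (kingGrid n).dist_eq_of_adj_le_succ_of_exists_adj_lt _ (fun v => by simp [chebyshevDist])
    (fun u w v huw => ?_) (fun u v huv => ?_) u v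
  · rw [kingGrid_adj] at huw
    simp only [chebyshevDist, max_le_iff] at huw ⊢
    omega
  · obtain ⟨c₁, hc₁, hc₁'⟩ := Fin.exists_step_toward u.1 v.1
    obtain ⟨c₂, hc₂, hc₂'⟩ := Fin.exists_step_toward u.2 v.2
    have hpos : chebyshevDist u v ≠ 0 := chebyshevDist_eq_zero.not.mpr huv
    have hstep : chebyshevDist (c₁, c₂) v = chebyshevDist u v - 1 := by
      simp only [chebyshevDist] at hpos ⊢
      omega
    refine ⟨(c₁, c₂), kingGrid_adj.mpr ⟨fun h => ?_, ?_⟩, by omega⟩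
    · rw [← h] at hstep; omega
    · simp only [chebyshevDist, max_le_iff]; exact ⟨hc₁, hc₂⟩

theorem expWeight_kingGrid (u v : Fin n × Fin n) :
    expWeight (kingGrid n) u v = 2 ^ ((1 : ℤ) - chebyshevDist u v) := by
  rw [expWeight, kingGrid_dist]

end KingGrid

/-- Sixteen times the weight sent to a vertex `v` by the lattice points `v + p - (5, 5)` of its
11 × 11 box, where `s ≡ v.1 + 5 v.2 - 30 (mod 23)`. -/
def latticeBoxWeight (s : ℕ) : ℕ :=
  ∑ p : Fin 11 × Fin 11,
    if ((p.1 : ℕ) + 5 * p.2 + s) % 23 = 0 then 2 ^ (5 - max (Nat.dist p.1 5) (Nat.dist p.2 5))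
    else 0

set_option maxRecDepth 10000 in
theorem sixteen_le_latticeBoxWeight : ∀ s : Fin 23, 16 ≤ latticeBoxWeight s := by
  decide

section KingDomSet

variable {n : ℕ}

def kingLattice (n : ℕ) : Finset (Fin n × Fin n) :=
  univ.filter fun v => ((v.1 : ℕ) + 5 * v.2) % 23 = 0

def IsFarFromEnds (i : Fin n) : Prop := 5 ≤ (i : ℕ) ∧ (i : ℕ) + 6 ≤ n

instance : DecidablePred (IsFarFromEnds (n := n)) := fun _ => instDecidableAnd

def kingDomSet (n : ℕ) : Finset (Fin n × Fin n) :=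
  kingLattice n ∪ univ.filter fun v => ¬(IsFarFromEnds v.1 ∧ IsFarFromEnds v.2)

theorem one_le_sum_expWeight_kingLattice {v : Fin n × Fin n} (h₁ : IsFarFromEnds v.1)
    (h₂ : IsFarFromEnds v.2) : 1 ≤ ∑ d ∈ kingLattice n, expWeight (kingGrid n) d v := by
  obtain ⟨h₁, h₁'⟩ := h₁
  obtain ⟨h₂, h₂'⟩ := h₂
  let f (p : Fin 11 × Fin 11) : Fin n × Fin n :=
    (⟨v.1 + p.1 - 5, by omega⟩, ⟨v.2 + p.2 - 5, by omega⟩)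
  have hf (p : Fin 11 × Fin 11) :
      ((f p).1 : ℕ) = v.1 + p.1 - 5 ∧ ((f p).2 : ℕ) = v.2 + p.2 - 5 := ⟨rfl, rfl⟩
  have f_inj : Function.Injective f := fun p q h => by
    have := hf p; have := hf q
    rw [h] at *
    exact Prod.ext (Fin.ext (by omega)) (Fin.ext (by omega))
  set s := ((v.1 : ℕ) + 5 * v.2 + 16) % 23
  set P := univ.filter fun p : Fin 11 × Fin 11 => ((p.1 : ℕ) + 5 * p.2 + s) % 23 = 0
  have image_subset : P.image f ⊆ kingLattice n := by
    intro d hd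
    obtain ⟨p, hp, rfl⟩ := mem_image.mp hd
    have := hf p
    simp only [P, kingLattice, mem_filter, mem_univ, true_and] at hp ⊢
    omega
  have weight (p : Fin 11 × Fin 11) : expWeight (kingGrid n) (f p) v =
      2 ^ (5 - max (Nat.dist p.1 5) (Nat.dist p.2 5)) / 16 := by
    have hd : chebyshevDist (f p) v = max (Nat.dist p.1 5) (Nat.dist p.2 5) := by
      have := hf p
      simp only [chebyshevDist, Nat.dist]
      omega
    have h5 : max (Nat.dist p.1 5) (Nat.dist p.2 5) ≤ 5 := by
      simp only [Nat.dist]; omega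
    rw [expWeight_kingGrid, hd, ← zpow_natCast, eq_div_iff (by norm_num), Nat.cast_sub h5,
      show (16 : ℝ) = 2 ^ (4 : ℤ) by norm_num, ← zpow_add₀ two_ne_zero]
    congr 1
    push_cast
    ring
  calc (1 : ℝ) ≤ latticeBoxWeight s / 16 := by
        rw [le_div_iff₀ (by norm_num), one_mul]
        exact_mod_cast sixteen_le_latticeBoxWeight ⟨s, Nat.mod_lt _ (by norm_num)⟩
    _ = ∑ p ∈ P, expWeight (kingGrid n) (f p) v := by
        simp only [P, latticeBoxWeight, sum_filter, weight]
        push_cast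
        rw [sum_div]
        refine sum_congr rfl fun p _ => ?_
        split_ifs <;> simp
    _ = ∑ d ∈ P.image f, expWeight (kingGrid n) d v := by
        rw [sum_image fun p _ q _ h => f_inj h]
    _ ≤ ∑ d ∈ kingLattice n, expWeight (kingGrid n) d v :=
        sum_le_sum_of_subset_of_nonneg image_subset fun d _ _ => (expWeight_pos _ d v).le

theorem isPorousExpDomSet_kingDomSet (n : ℕ) : IsPorousExpDomSet (kingGrid n) (kingDomSet n) := by
  intro v
  by_cases hv : IsFarFromEnds v.1 ∧ IsFarFromEnds v.2
  · exact (one_le_sum_expWeight_kingLattice hv.1 hv.2).trans <|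
      sum_le_sum_of_subset_of_nonneg subset_union_left fun d _ _ => (expWeight_pos _ d v).le
  · exact one_le_sum_expWeight_of_mem (mem_union_right _ (mem_filter.mpr ⟨mem_univ v, hv⟩))

theorem card_kingLattice_le (n : ℕ) : (kingLattice n).card ≤ (n / 23 + 1) * n := by
  refine (card_le_card_of_injOn (fun v : Fin n × Fin n => ((v.1 : ℕ) / 23, v.2))
    (t := range (n / 23 + 1) ×ˢ univ) (fun v _ => ?_) fun v hv w hw h => ?_).trans (by simp)
  · simp only [coe_product, coe_range, coe_univ, Set.mem_prod, Set.mem_Iio, Set.mem_univ, and_true]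
    have := v.1.isLt
    omega
  · simp only [kingLattice, mem_coe, mem_filter, mem_univ, true_and, Prod.mk.injEq] at hv hw h
    rw [h.2] at hv
    exact Prod.ext (Fin.ext (by omega)) h.2

theorem card_not_isFarFromEnds_le (n : ℕ) :
    (univ.filter fun i : Fin n => ¬IsFarFromEnds i).card ≤ 10 := by
  refine (card_le_card_of_injOn Fin.val (t := range 5 ∪ Ico (n - 5) n) (fun i hi => ?_)
    Fin.val_injective.injOn).trans
      ((card_union_le _ _).trans (by rw [card_range, Nat.card_Ico]; omega))
  simp only [IsFarFromEnds, not_and, not_le, coe_filter, mem_univ, true_and,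
    Set.mem_ofPred_eq] at hi
  simp only [coe_union, coe_range, coe_Ico, Set.mem_union, Set.mem_Iio, Set.mem_Ico]
  omega

theorem card_kingDomSet_le (n : ℕ) : (kingDomSet n).card ≤ (n / 23 + 1) * n + 20 * n := by
  set E := univ.filter fun i : Fin n => ¬IsFarFromEnds i
  have hborder :
      (univ.filter fun v : Fin n × Fin n => ¬(IsFarFromEnds v.1 ∧ IsFarFromEnds v.2)) ⊆
        E ×ˢ univ ∪ univ ×ˢ E := by
    intro v
    simp only [E, mem_filter, mem_univ, true_and, mem_union, mem_product, and_true]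
    tauto
  have hE := card_not_isFarFromEnds_le n
  calc (kingDomSet n).card ≤ (kingLattice n).card + (E ×ˢ univ ∪ univ ×ˢ E).card :=
        (card_union_le _ _).trans (by gcongr)
    _ ≤ (n / 23 + 1) * n + (E.card * n + n * E.card) := by
        gcongr
        · exact card_kingLattice_le n
        · exact (card_union_le _ _).trans (by simp [card_product])
    _ ≤ (n / 23 + 1) * n + 20 * n := by nlinarith

end KingDomSet

theorem Filter.limsup_le_of_eventually_le_of_tendsto {ι α : Type*}
    [ConditionallyCompleteLinearOrder α] [TopologicalSpace α] [OrderTopology α]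
    {l : Filter ι} [l.NeBot] {u v : ι → α} {b c : α} (hu : ∀ i, b ≤ u i)
    (huv : ∀ᶠ i in l, u i ≤ v i)
    (hv : Tendsto v l (𝓝 c)) : limsup u l ≤ c :=
  hv.limsup_eq ▸ limsup_le_limsup huv (isCoboundedUnder_le_of_le l hu) hv.isBoundedUnder_le

theorem porousExpDomNumber_kingGrid_div_le {n : ℕ} (hn : n ≠ 0) :
    (porousExpDomNumber (kingGrid n) : ℝ) / n ^ 2 ≤ 1 / 23 + 21 / n := by
  have hγ : (porousExpDomNumber (kingGrid n) : ℝ) ≤ ((n / 23 : ℕ) + 1) * n + 20 * n :=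
    mod_cast (porousExpDomNumber_le_card (isPorousExpDomSet_kingDomSet n)).trans
      (card_kingDomSet_le n)
  have hdiv : ((n / 23 : ℕ) : ℝ) ≤ n / 23 := Nat.cast_div_le
  rw [div_le_iff₀ (by positivity)]
  calc (porousExpDomNumber (kingGrid n) : ℝ) ≤ ((n / 23 : ℕ) + 1) * n + 20 * n := hγ
    _ ≤ (n / 23 + 1) * n + 20 * n := by gcongr
    _ = (1 / 23 + 21 / n) * n ^ 2 := by field_simp; ring

/-- `limsup_{n → ∞} γ*_e(K_n)/n² ≤ 1/23`. -/
theorem kingGrid_porousExpDomNumber_limsup :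
    Filter.limsup (fun n : ℕ => (porousExpDomNumber (kingGrid n) : ℝ) / (n : ℝ) ^ 2)
      Filter.atTop ≤ 1 / 23 := by
  refine Filter.limsup_le_of_eventually_le_of_tendsto (fun n => by positivity)
    ((eventually_ne_atTop 0).mono fun n hn => porousExpDomNumber_kingGrid_div_le hn) ?_
  simpa using tendsto_const_nhds.add (tendsto_const_div_atTop_nhds_zero_nat (21 : ℝ))
end

section
/- For every n ≥ 1 and every vertex d of the Slant grid S_n, the total weight Σ_{v ∈ V(S_n)} 2^(1 - dist(d,v)) is strictly less than 26. -/
open SimpleGraph Finset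

/-- hex norm of the displacement from u to v -/
def slantM {n : ℕ} (u v : Fin n × Fin n) : ℕ :=
  max (max ((v.1.val:ℤ) - u.1.val).natAbs ((v.2.val:ℤ) - u.2.val).natAbs)
      (((v.1.val:ℤ) - u.1.val) - ((v.2.val:ℤ) - u.2.val)).natAbs

set_option maxHeartbeats 1000000 in
lemma slantM_lipschitz {n : ℕ} {a b : Fin n × Fin n} (h : (slantGrid n).Adj a b)
    (w : Fin n × Fin n) : slantM a w ≤ slantM b w + 1 := by
  rw [slantGrid, SimpleGraph.fromRel_adj] at h
  obtain ⟨-, h | h⟩ := h <;> unfold slantM <;>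
    rcases h with ⟨h1, h2⟩ | ⟨h1, h2⟩ | ⟨h1, h2⟩ <;> omega

lemma slantM_le_length {n : ℕ} {u v : Fin n × Fin n} (p : (slantGrid n).Walk u v) :
    slantM u v ≤ p.length := by
  induction p with
  | nil => unfold slantM; omega
  | @cons a b c h p ih =>
      have := slantM_lipschitz h c
      simp only [SimpleGraph.Walk.length_cons]
      omega

lemma slantGrid_adj_right {n : ℕ} (k : ℕ) (hk : k + 1 < n) (j : Fin n) :
    (slantGrid n).Adj (⟨k+1, hk⟩, j) (⟨k, by omega⟩, j) := by
  rw [slantGrid, SimpleGraph.fromRel_adj]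
  refine ⟨?_, Or.inr (Or.inl ⟨by simp, rfl⟩)⟩
  simp [Prod.ext_iff, Fin.ext_iff]

lemma slantGrid_adj_up {n : ℕ} (i : Fin n) (k : ℕ) (hk : k + 1 < n) :
    (slantGrid n).Adj (i, ⟨k+1, hk⟩) (i, ⟨k, by omega⟩) := by
  rw [slantGrid, SimpleGraph.fromRel_adj]
  refine ⟨?_, Or.inr (Or.inr (Or.inl ⟨rfl, by simp⟩))⟩
  simp [Prod.ext_iff, Fin.ext_iff]

lemma slantGrid_reach_col {n : ℕ} (hn : 0 < n) :
    ∀ (k : ℕ) (hk : k < n) (j : Fin n),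
      (slantGrid n).Reachable (⟨k, hk⟩, j) (⟨0, hn⟩, j) := by
  intro k
  induction k with
  | zero => intro hk j; rfl
  | succ m ih =>
      intro hk j
      exact ((slantGrid_adj_right m hk j).reachable).trans (ih (by omega) j)

lemma slantGrid_reach_row {n : ℕ} (hn : 0 < n) (i : Fin n) :
    ∀ (k : ℕ) (hk : k < n),
      (slantGrid n).Reachable (i, ⟨k, hk⟩) (i, ⟨0, hn⟩) := by
  intro k
  induction k with
  | zero => intro hk; rfl
  | succ m ih =>
      intro hk
      exact ((slantGrid_adj_up i m hk).reachable).trans (ih (by omega))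

lemma slantGrid_preconnected {n : ℕ} (hn : 0 < n) :
    (slantGrid n).Preconnected := by
  have key : ∀ v : Fin n × Fin n, (slantGrid n).Reachable v (⟨0, hn⟩, ⟨0, hn⟩) := by
    rintro ⟨⟨i, hi⟩, ⟨j, hj⟩⟩
    exact (slantGrid_reach_col hn i hi ⟨j, hj⟩).trans (slantGrid_reach_row hn _ j hj)
  intro u v
  exact (key u).trans (key v).symm

lemma slantM_le_dist {n : ℕ} (hn : 0 < n) (u v : Fin n × Fin n) :
    slantM u v ≤ (slantGrid n).dist u v := by
  obtain ⟨p, hp⟩ := (slantGrid_preconnected hn u v).exists_walk_length_eq_dist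
  rw [← hp]
  exact slantM_le_length p


lemma half_lt_one : ‖(1/2 : ℝ)‖ < 1 := by rw [Real.norm_eq_abs, abs_of_pos] <;> norm_num

lemma summable_half : Summable (fun k : ℕ => (1/2:ℝ)^k) :=
  summable_geometric_of_norm_lt_one half_lt_one

lemma summable_k_half : Summable (fun k : ℕ => (k:ℝ) * (1/2:ℝ)^k) := by
  have := summable_pow_mul_geometric_of_norm_lt_one (R := ℝ) 1 half_lt_one
  simpa using this

lemma tsum_half : ∑' k : ℕ, (1/2:ℝ)^k = 2 := by
  rw [tsum_geometric_of_lt_one (by norm_num) (by norm_num)]; norm_num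

lemma tsum_k_half : ∑' k : ℕ, (k:ℝ) * (1/2:ℝ)^k = 2 := by
  rw [tsum_coe_mul_geometric_of_norm_lt_one half_lt_one]; norm_num

lemma sum_le_tsum_of_injOn {α : Type*} (s : Finset α) (e : α → ℕ)
    (he : Set.InjOn e s) (f : ℕ → ℝ) (hf0 : ∀ k, 0 ≤ f k) (hf : Summable f) :
    ∑ j ∈ s, f (e j) ≤ ∑' k, f k := by
  rw [← Finset.sum_image (fun x hx y hy h => he hx hy h)]
  exact Summable.sum_le_tsum _ (fun _ _ => hf0 _) hf

lemma sum_le_tsum_of_injOn_avoid {α : Type*} (s : Finset α) (e : α → ℕ)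
    (he : Set.InjOn e s) (f : ℕ → ℝ) (hf0 : ∀ k, 0 ≤ f k) (hf : Summable f)
    (m : ℕ) (hm : ∀ j ∈ s, e j ≠ m) :
    ∑ j ∈ s, f (e j) ≤ (∑' k, f k) - f m := by
  rw [← Finset.sum_image (fun x hx y hy h => he hx hy h)]
  have hmem : m ∉ s.image e := by
    simp only [Finset.mem_image, not_exists]
    intro j; intro h; rcases h with ⟨hj, hje⟩; exact absurd hje (hm j hj)
  have h1 : ∑ k ∈ insert m (s.image e), f k ≤ ∑' k, f k :=
    Summable.sum_le_tsum _ (fun _ _ => hf0 _) hf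
  rw [Finset.sum_insert hmem] at h1
  linarith

lemma summable_g : Summable (fun k : ℕ => ((k:ℝ)+4) * (1/2:ℝ)^(k+1)) := by
  have h : (fun k : ℕ => ((k:ℝ)+4) * (1/2:ℝ)^(k+1))
      = fun k : ℕ => (1/2) * ((k:ℝ) * (1/2:ℝ)^k) + 2 * ((1/2:ℝ)^k) := by
    funext k; ring
  rw [h]
  exact ((summable_k_half.mul_left _).add (summable_half.mul_left _))

lemma tsum_g : ∑' k : ℕ, (((k:ℝ)+4) * (1/2:ℝ)^(k+1)) = 5 := by
  have h : (fun k : ℕ => ((k:ℝ)+4) * (1/2:ℝ)^(k+1))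
      = fun k : ℕ => (1/2) * ((k:ℝ) * (1/2:ℝ)^k) + 2 * ((1/2:ℝ)^k) := by
    funext k; ring
  rw [h, Summable.tsum_add (summable_k_half.mul_left _) (summable_half.mul_left _),
    tsum_mul_left, tsum_mul_left, tsum_half, tsum_k_half]
  norm_num

lemma summable_h : Summable (fun k : ℕ => ((k:ℝ)+3) * (1/2:ℝ)^k) := by
  have h : (fun k : ℕ => ((k:ℝ)+3) * (1/2:ℝ)^k)
      = fun k : ℕ => ((k:ℝ) * (1/2:ℝ)^k) + 3 * ((1/2:ℝ)^k) := by
    funext k; ring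
  rw [h]
  exact (summable_k_half.add (summable_half.mul_left _))

lemma tsum_h : ∑' k : ℕ, (((k:ℝ)+3) * (1/2:ℝ)^k) = 8 := by
  have h : (fun k : ℕ => ((k:ℝ)+3) * (1/2:ℝ)^k)
      = fun k : ℕ => ((k:ℝ) * (1/2:ℝ)^k) + 3 * ((1/2:ℝ)^k) := by
    funext k; ring
  rw [h, Summable.tsum_add summable_k_half (summable_half.mul_left _),
    tsum_mul_left, tsum_half, tsum_k_half]
  norm_num

lemma summable_f1 : Summable (fun k : ℕ => (1/2:ℝ)^(k+1)) := by
  have h : (fun k : ℕ => (1/2:ℝ)^(k+1)) = fun k : ℕ => (1/2) * (1/2:ℝ)^k := by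
    funext k; ring
  rw [h]; exact summable_half.mul_left _

lemma tsum_f1 : ∑' k : ℕ, (1/2:ℝ)^(k+1) = 1 := by
  have h : (fun k : ℕ => (1/2:ℝ)^(k+1)) = fun k : ℕ => (1/2) * (1/2:ℝ)^k := by
    funext k; ring
  rw [h, tsum_mul_left, tsum_half]; norm_num

lemma inner_excess_le (n q : ℕ) (x : ℤ) :
    ∑ j : Fin n, (1/2:ℝ) ^ ((min 0 x - ((j.val:ℤ) - q)).toNat + (((j.val:ℤ) - q) - max 0 x).toNat)
      ≤ (x.natAbs : ℝ) + 3 := by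
  have hsplit1 := Finset.sum_filter_add_sum_filter_not Finset.univ
    (fun j : Fin n => ((j.val:ℤ) - q) < min 0 x)
    (fun j : Fin n => (1/2:ℝ) ^ ((min 0 x - ((j.val:ℤ) - q)).toNat + (((j.val:ℤ) - q) - max 0 x).toNat))
  have hsplit2 := Finset.sum_filter_add_sum_filter_not
    (Finset.univ.filter (fun j : Fin n => ¬ ((j.val:ℤ) - q) < min 0 x))
    (fun j : Fin n => max 0 x < ((j.val:ℤ) - q))
    (fun j : Fin n => (1/2:ℝ) ^ ((min 0 x - ((j.val:ℤ) - q)).toNat + (((j.val:ℤ) - q) - max 0 x).toNat))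
  have hA : ∑ j ∈ Finset.univ.filter (fun j : Fin n => ((j.val:ℤ) - q) < min 0 x),
      (1/2:ℝ) ^ ((min 0 x - ((j.val:ℤ) - q)).toNat + (((j.val:ℤ) - q) - max 0 x).toNat) ≤ 1 := by
    have hcongr : ∀ j ∈ Finset.univ.filter (fun j : Fin n => ((j.val:ℤ) - q) < min 0 x),
        (1/2:ℝ) ^ ((min 0 x - ((j.val:ℤ) - q)).toNat + (((j.val:ℤ) - q) - max 0 x).toNat)
          = (fun k => (1/2:ℝ)^(k+1)) ((min 0 x - ((j.val:ℤ) - q)).toNat - 1) := by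
      intro j hj
      simp only [Finset.mem_filter, Finset.mem_univ, true_and] at hj
      have h : ((min 0 x - ((j.val:ℤ) - q)).toNat + (((j.val:ℤ) - q) - max 0 x).toNat)
          = ((min 0 x - ((j.val:ℤ) - q)).toNat - 1) + 1 := by omega
      rw [h]
    rw [Finset.sum_congr rfl hcongr]
    calc _ ≤ ∑' k : ℕ, (1/2:ℝ)^(k+1) := by
          apply sum_le_tsum_of_injOn _ _ _ _ (fun k => by positivity) summable_f1
          intro a ha b hb hab
          simp only [Finset.coe_filter, Finset.mem_univ, true_and, Set.mem_setOf_eq] at ha hb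
          simp only at hab
          have : (a.val : ℤ) = b.val := by omega
          exact Fin.ext (by omega)
      _ = 1 := tsum_f1
  have hC : ∑ j ∈ (Finset.univ.filter (fun j : Fin n => ¬ ((j.val:ℤ) - q) < min 0 x)).filter
      (fun j : Fin n => max 0 x < ((j.val:ℤ) - q)),
      (1/2:ℝ) ^ ((min 0 x - ((j.val:ℤ) - q)).toNat + (((j.val:ℤ) - q) - max 0 x).toNat) ≤ 1 := by
    have hcongr : ∀ j ∈ (Finset.univ.filter (fun j : Fin n => ¬ ((j.val:ℤ) - q) < min 0 x)).filter
        (fun j : Fin n => max 0 x < ((j.val:ℤ) - q)),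
        (1/2:ℝ) ^ ((min 0 x - ((j.val:ℤ) - q)).toNat + (((j.val:ℤ) - q) - max 0 x).toNat)
          = (fun k => (1/2:ℝ)^(k+1)) ((((j.val:ℤ) - q) - max 0 x).toNat - 1) := by
      intro j hj
      simp only [Finset.mem_filter, Finset.mem_univ, true_and] at hj
      have h : ((min 0 x - ((j.val:ℤ) - q)).toNat + (((j.val:ℤ) - q) - max 0 x).toNat)
          = ((((j.val:ℤ) - q) - max 0 x).toNat - 1) + 1 := by omega
      rw [h]
    rw [Finset.sum_congr rfl hcongr]
    calc _ ≤ ∑' k : ℕ, (1/2:ℝ)^(k+1) := by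
          apply sum_le_tsum_of_injOn _ _ _ _ (fun k => by positivity) summable_f1
          intro a ha b hb hab
          simp only [Finset.coe_filter, Finset.mem_univ, true_and, Set.mem_setOf_eq] at ha hb
          simp only at hab
          have : (a.val : ℤ) = b.val := by omega
          exact Fin.ext (by omega)
      _ = 1 := tsum_f1
  have hB : ∑ j ∈ (Finset.univ.filter (fun j : Fin n => ¬ ((j.val:ℤ) - q) < min 0 x)).filter
      (fun j : Fin n => ¬ max 0 x < ((j.val:ℤ) - q)),
      (1/2:ℝ) ^ ((min 0 x - ((j.val:ℤ) - q)).toNat + (((j.val:ℤ) - q) - max 0 x).toNat)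
        ≤ (x.natAbs : ℝ) + 1 := by
    have hone : ∀ j ∈ (Finset.univ.filter (fun j : Fin n => ¬ ((j.val:ℤ) - q) < min 0 x)).filter
        (fun j : Fin n => ¬ max 0 x < ((j.val:ℤ) - q)),
        (1/2:ℝ) ^ ((min 0 x - ((j.val:ℤ) - q)).toNat + (((j.val:ℤ) - q) - max 0 x).toNat) = 1 := by
      intro j hj
      simp only [Finset.mem_filter, Finset.mem_univ, true_and] at hj
      have h : ((min 0 x - ((j.val:ℤ) - q)).toNat + (((j.val:ℤ) - q) - max 0 x).toNat) = 0 := by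
        omega
      rw [h, pow_zero]
    rw [Finset.sum_congr rfl hone, Finset.sum_const, nsmul_eq_mul, mul_one]
    have hcard : ((Finset.univ.filter (fun j : Fin n => ¬ ((j.val:ℤ) - q) < min 0 x)).filter
        (fun j : Fin n => ¬ max 0 x < ((j.val:ℤ) - q))).card ≤ x.natAbs + 1 := by
      have hle : ((Finset.univ.filter (fun j : Fin n => ¬ ((j.val:ℤ) - q) < min 0 x)).filter
          (fun j : Fin n => ¬ max 0 x < ((j.val:ℤ) - q))).card
          ≤ (Finset.Icc (min 0 x) (max 0 x)).card := by
        apply Finset.card_le_card_of_injOn (fun j : Fin n => (j.val:ℤ) - q)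
        · intro j hj
          rw [Finset.mem_coe] at hj
          simp only [Finset.mem_filter, Finset.mem_univ, true_and] at hj
          rw [Finset.mem_coe, Finset.mem_Icc]
          simp only
          omega
        · intro a ha b hb hab
          simp only [Finset.coe_filter, Finset.mem_univ, true_and, Set.mem_setOf_eq] at ha hb
          simp only at hab
          have : (a.val : ℤ) = b.val := by omega
          exact Fin.ext (by omega)
      rw [Int.card_Icc] at hle
      omega
    calc (((Finset.univ.filter (fun j : Fin n => ¬ ((j.val:ℤ) - q) < min 0 x)).filter
        (fun j : Fin n => ¬ max 0 x < ((j.val:ℤ) - q))).card : ℝ)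
        ≤ ((x.natAbs + 1 : ℕ) : ℝ) := by exact Nat.cast_le.mpr hcard
      _ = (x.natAbs : ℝ) + 1 := by push_cast; ring
  rw [← hsplit1, ← hsplit2]
  linarith

lemma inner_sum_le (n q : ℕ) (x : ℤ) :
    ∑ j : Fin n, (1/2:ℝ) ^ (max (max x.natAbs ((j.val:ℤ) - q).natAbs) (x - ((j.val:ℤ) - q)).natAbs)
      ≤ ((x.natAbs:ℝ) + 3) * (1/2:ℝ)^x.natAbs := by
  calc ∑ j : Fin n, (1/2:ℝ) ^ (max (max x.natAbs ((j.val:ℤ) - q).natAbs) (x - ((j.val:ℤ) - q)).natAbs)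
      ≤ ∑ j : Fin n, (1/2:ℝ) ^ (x.natAbs +
          ((min 0 x - ((j.val:ℤ) - q)).toNat + (((j.val:ℤ) - q) - max 0 x).toNat)) := by
        apply Finset.sum_le_sum
        intro j _
        apply pow_le_pow_of_le_one (by norm_num) (by norm_num)
        omega
    _ = ∑ j : Fin n, (1/2:ℝ)^x.natAbs *
          (1/2:ℝ) ^ ((min 0 x - ((j.val:ℤ) - q)).toNat + (((j.val:ℤ) - q) - max 0 x).toNat) := by
        apply Finset.sum_congr rfl
        intro j _
        rw [pow_add]
    _ = (1/2:ℝ)^x.natAbs * ∑ j : Fin n,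
          (1/2:ℝ) ^ ((min 0 x - ((j.val:ℤ) - q)).toNat + (((j.val:ℤ) - q) - max 0 x).toNat) := by
        rw [Finset.mul_sum]
    _ ≤ (1/2:ℝ)^x.natAbs * ((x.natAbs : ℝ) + 3) := by
        apply mul_le_mul_of_nonneg_left (inner_excess_le n q x) (by positivity)
    _ = ((x.natAbs:ℝ) + 3) * (1/2:ℝ)^x.natAbs := by ring

lemma outer_sum_lt (n p : ℕ) (hp : p < n) :
    ∑ i : Fin n, ((((i.val:ℤ) - p).natAbs : ℝ) + 3) * (1/2:ℝ)^(((i.val:ℤ) - p).natAbs) < 13 := by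
  have hsplit := Finset.sum_filter_add_sum_filter_not Finset.univ
    (fun i : Fin n => (i.val:ℤ) < p)
    (fun i : Fin n => ((((i.val:ℤ) - p).natAbs : ℝ) + 3) * (1/2:ℝ)^(((i.val:ℤ) - p).natAbs))
  have hL : ∑ i ∈ Finset.univ.filter (fun i : Fin n => (i.val:ℤ) < p),
      ((((i.val:ℤ) - p).natAbs : ℝ) + 3) * (1/2:ℝ)^(((i.val:ℤ) - p).natAbs) ≤ 5 := by
    have hcongr : ∀ i ∈ Finset.univ.filter (fun i : Fin n => (i.val:ℤ) < p),
        ((((i.val:ℤ) - p).natAbs : ℝ) + 3) * (1/2:ℝ)^(((i.val:ℤ) - p).natAbs)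
          = (fun k : ℕ => ((k:ℝ)+4) * (1/2:ℝ)^(k+1)) (p - i.val - 1) := by
      intro i hi
      simp only [Finset.mem_filter, Finset.mem_univ, true_and] at hi
      have h : ((i.val:ℤ) - p).natAbs = (p - i.val - 1) + 1 := by omega
      rw [h]
      push_cast
      ring
    rw [Finset.sum_congr rfl hcongr]
    calc _ ≤ ∑' k : ℕ, (((k:ℝ)+4) * (1/2:ℝ)^(k+1)) := by
          apply sum_le_tsum_of_injOn _ _ _ _ (fun k => by positivity) summable_g
          intro a ha b hb hab
          simp only [Finset.coe_filter, Finset.mem_univ, true_and, Set.mem_setOf_eq] at ha hb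
          simp only at hab
          exact Fin.ext (by omega)
      _ = 5 := tsum_g
  have hR : ∑ i ∈ Finset.univ.filter (fun i : Fin n => ¬ (i.val:ℤ) < p),
      ((((i.val:ℤ) - p).natAbs : ℝ) + 3) * (1/2:ℝ)^(((i.val:ℤ) - p).natAbs)
        ≤ 8 - ((n:ℝ)+3) * (1/2:ℝ)^n := by
    have hcongr : ∀ i ∈ Finset.univ.filter (fun i : Fin n => ¬ (i.val:ℤ) < p),
        ((((i.val:ℤ) - p).natAbs : ℝ) + 3) * (1/2:ℝ)^(((i.val:ℤ) - p).natAbs)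
          = (fun k : ℕ => ((k:ℝ)+3) * (1/2:ℝ)^k) (i.val - p) := by
      intro i hi
      simp only [Finset.mem_filter, Finset.mem_univ, true_and] at hi
      have h : ((i.val:ℤ) - p).natAbs = i.val - p := by omega
      rw [h]
    rw [Finset.sum_congr rfl hcongr]
    calc _ ≤ (∑' k : ℕ, (((k:ℝ)+3) * (1/2:ℝ)^k)) - ((n:ℝ)+3) * (1/2:ℝ)^n := by
          apply sum_le_tsum_of_injOn_avoid _ _ _ _ (fun k => by positivity) summable_h n
          · intro j hj
            simp only [Finset.mem_filter, Finset.mem_univ, true_and] at hj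
            have := j.isLt
            omega
          · intro a ha b hb hab
            simp only [Finset.coe_filter, Finset.mem_univ, true_and, Set.mem_setOf_eq] at ha hb
            simp only at hab
            exact Fin.ext (by omega)
      _ = 8 - ((n:ℝ)+3) * (1/2:ℝ)^n := by rw [tsum_h]
  have hpos : 0 < ((n:ℝ)+3) * (1/2:ℝ)^n := by positivity
  rw [← hsplit]
  linarith


/-- In the Slant grid `S_n`, every vertex sends out total weight strictly
less than `26`. -/
theorem slantGrid_total_weight_lt (n : ℕ) (hn : 1 ≤ n) (d : Fin n × Fin n) :
    ∑ v : Fin n × Fin n, expWeight (slantGrid n) d v < 26 := by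
  have h0 : 0 < n := hn
  have key : ∀ v, expWeight (slantGrid n) d v ≤ 2 * (1/2:ℝ)^(slantM d v) := by
    intro v
    unfold expWeight
    have hMd : (slantM d v : ℤ) ≤ ((slantGrid n).dist d v : ℤ) := by
      exact_mod_cast slantM_le_dist h0 d v
    calc (2:ℝ)^((1:ℤ) - ((slantGrid n).dist d v : ℤ))
        ≤ (2:ℝ)^((1:ℤ) - (slantM d v : ℤ)) := by
          apply zpow_le_zpow_right₀ (by norm_num)
          omega
      _ = 2 * (1/2:ℝ)^(slantM d v) := by
          rw [zpow_sub₀ (by norm_num : (2:ℝ) ≠ 0), zpow_one, zpow_natCast, one_div, inv_pow]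
          ring
  calc ∑ v : Fin n × Fin n, expWeight (slantGrid n) d v
      ≤ ∑ v : Fin n × Fin n, 2 * (1/2:ℝ)^(slantM d v) :=
        Finset.sum_le_sum (fun v _ => key v)
    _ = 2 * ∑ v : Fin n × Fin n, (1/2:ℝ)^(slantM d v) := by rw [Finset.mul_sum]
    _ = 2 * ∑ i : Fin n, ∑ j : Fin n, (1/2:ℝ)^(slantM d (i, j)) := by
        rw [Fintype.sum_prod_type]
    _ ≤ 2 * ∑ i : Fin n, ((((i.val:ℤ) - d.1.val).natAbs : ℝ) + 3)
          * (1/2:ℝ)^(((i.val:ℤ) - d.1.val).natAbs) := by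
        apply mul_le_mul_of_nonneg_left _ (by norm_num)
        apply Finset.sum_le_sum
        intro i _
        exact inner_sum_le n d.2.val ((i.val:ℤ) - d.1.val)
    _ < 2 * 13 := by
        apply mul_lt_mul_of_pos_left (outer_sum_lt n d.1.val d.1.isLt) (by norm_num)
    _ = 26 := by norm_num
end
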